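/- Let n ≥ 1 and consider the alternating deck of 2n cards (position p red iff p is odd). Let w_0 be the alternating word, let O be the set of color words that are a riffle of the cut at p for some odd p with 1 ≤ p ≤ 2n-1, and let E be the set of color words that are a riffle of the cut at p for some even p with 0 ≤ p ≤ 2n. Then for every color word w ∈ {red, black}^{2n}, the number of words f : {1,…,2n} → {1,2} such that w(f) = w equals: 2^n + 2^{n-1} if w = w_0; 2^{n-1} if w ∈ O and w ≠ w_0; 2^n if w ∈ E and w ≠ w_0; and 0 if w ∉ O ∪ E. Equivalently, the 2-shuffle probability Q_2(w) is these counts divided by 2^{2n}. -/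

import Mathlib

/-!
Write a 2-shuffle word `f` as the choice, at each final position, of the pile the card comes
from (`f k = 0`: the top pile, the first `p` cards of the deck). The top pile delivers the
colours red, black, red, … and the bottom pile alternates starting after the parity of `p`; so,
scanning the positions from left to right, the colour demanded by each pile depends only on the
parity of the position, the parity of `p`, and the parity `ε` of the number of top-pile cards so
far. Where the position and `p` have the same parity the two piles demand opposite colours, so
the colour decides the pile and the new `ε` is read off the colour; otherwise both piles demand
the same colour, which pins down the previous `ε` and leaves the new one free. Taking positions
in pairs, the number of words with a given pattern and a given parity of `p` doubles or
vanishes at each pair, which gives `2^n` or `0` for even `p` and `2^(n-1)` or `0` for odd `p`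
(the last free choice is fixed by the parity of `p`). The even count is nonzero iff `w` starts
red, ends black and the colours at positions `2k` and `2k+1` differ; the odd count iff those at
`2k-1` and `2k` differ; both hold only for `w_0`.
-/

/-- Bayer–Diaconis encoding: for a shuffle word `f : Fin n → Fin a`, the card at final
position `i` originally occupied 1-based position `pos f i`. -/
def pos {n a : ℕ} (f : Fin n → Fin a) (i : Fin n) : ℕ :=
  (Finset.univ.filter fun j => f j < f i).card +
    (Finset.univ.filter fun j => j ≤ i ∧ f j = f i).card

/-- Color pattern of the shuffle word `f` for the alternating deck (original position `p`
red iff `p` odd): final position `i` is red (`true`) iff `pos f i` is odd. -/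
def wAlt {n : ℕ} (f : Fin n → Fin 2) : Fin n → Bool :=
  fun i => decide (Odd (pos f i))

/-- The alternating color word: 1-based position `p` is red iff `p` is odd. -/
def w0 (n : ℕ) : Fin n → Bool := fun i => decide (Odd ((i : ℕ) + 1))

/-- `w : Fin N → Bool` (red = `true`) is a riffle of the cut of the alternating deck at `p`. -/
def IsRiffle (N p : ℕ) (w : Fin N → Bool) : Prop :=
  ∃ S : Finset (Fin N), S.card = p ∧
    (∀ i ∈ S, w i = decide (Odd (S.filter fun i' => i' ≤ i).card)) ∧
    (∀ i ∉ S, w i = decide (Odd (p + ((Finset.univ \ S).filter fun i' => i' ≤ i).card)))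

/-- `w` results from an odd cut of the alternating deck. -/
def memO (n : ℕ) (w : Fin (2 * n) → Bool) : Prop :=
  ∃ p, Odd p ∧ 1 ≤ p ∧ p ≤ 2 * n - 1 ∧ IsRiffle (2 * n) p w

/-- `w` results from an even cut of the alternating deck. -/
def memE (n : ℕ) (w : Fin (2 * n) → Bool) : Prop :=
  ∃ p, Even p ∧ p ≤ 2 * n ∧ IsRiffle (2 * n) p w

open Finset

namespace Nat

lemma decide_odd_eq_bodd (n : ℕ) : decide (Odd n) = n.bodd := by
  cases h : n.bodd <;> simp [odd_iff, mod_two_of_bodd, h]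

lemma bodd_eq_true_iff_odd (n : ℕ) : n.bodd = true ↔ Odd n := by
  rw [← decide_odd_eq_bodd, decide_eq_true_iff]

lemma bodd_eq_false_iff_even (n : ℕ) : n.bodd = false ↔ Even n := by
  rw [← decide_odd_eq_bodd, decide_eq_false_iff_not, not_odd_iff_even]

end Nat

namespace Fin

lemma ne_zero_iff_eq_one (a : Fin 2) : a ≠ 0 ↔ a = 1 := by omega

lemma card_filter_univ_castSucc {N : ℕ} (p : Fin (N + 1) → Prop) [DecidablePred p] :
    #{x | p x} = #{x : Fin N | p x.castSucc} + if p (last N) then 1 else 0 := by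
  rw [card_filter, card_filter, sum_univ_castSucc]

lemma card_filter_eq_zero_add_card_filter_eq_one {N : ℕ} (f : Fin N → Fin 2) :
    #{k | f k = 0} + #{k | f k = 1} = N := by
  simpa [ne_zero_iff_eq_one] using card_filter_add_card_filter_not (s := univ) (fun k => f k = 0)

lemma card_filter_le {N : ℕ} (p : Fin N → Prop) [DecidablePred p] : #{k | p k} ≤ N :=
  (card_le_univ _).trans_eq (card_fin N)

lemma card_filter_snoc {N : ℕ} {α : Type*} [Fintype α] (p : (Fin (N + 1) → α) → Prop)
    [DecidablePred p] :
    #{g | p g} = ∑ a, #{g : Fin N → α | p (snoc g a)} := by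
  simp only [card_filter]
  rw [← (snocEquiv fun _ => α).sum_comp, Fintype.sum_prod_type]
  rfl

end Fin

variable {N : ℕ}

/-- `f k = 0`: position `k` receives the next card of the top pile (colours red, black, …);
otherwise the next card of the bottom pile, whose colours alternate after the parity `q` of the
cut. -/
def Interleaves (q : Bool) (w : Fin N → Bool) (f : Fin N → Fin 2) : Prop :=
  ∀ i, w i = if f i = 0 then (#{k | k ≤ i ∧ f k = 0}).bodd
    else q ^^ (#{k | k ≤ i ∧ f k = 1}).bodd

instance (q : Bool) (w : Fin N → Bool) : DecidablePred (Interleaves q w) :=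
  fun _ => by unfold Interleaves; infer_instance

lemma pos_eq_ite (f : Fin N → Fin 2) (i : Fin N) :
    pos f i = if f i = 0 then #{k | k ≤ i ∧ f k = 0}
      else #{k | f k = 0} + #{k | k ≤ i ∧ f k = 1} := by
  unfold pos
  split_ifs with h
  · simp [h]
  · simp [Fin.eq_one_of_ne_zero _ h, Fin.lt_one_iff]

lemma wAlt_eq_iff (f : Fin N → Fin 2) (w : Fin N → Bool) :
    wAlt f = w ↔ Interleaves (#{k | f k = 0}).bodd w f := by
  simp only [funext_iff, wAlt, Interleaves, pos_eq_ite, Nat.decide_odd_eq_bodd, apply_ite Nat.bodd,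
    Nat.bodd_add, eq_comm]

lemma interleaves_iff (p : ℕ) (w : Fin N → Bool) {f : Fin N → Fin 2} {S : Finset (Fin N)}
    (hS : ∀ k, k ∈ S ↔ f k = 0) :
    Interleaves p.bodd w f ↔ (∀ i ∈ S, w i = decide (Odd #(S.filter (· ≤ i)))) ∧
      (∀ i ∉ S, w i = decide (Odd (p + #((univ \ S).filter (· ≤ i))))) := by
  have h0 : ∀ i, #(S.filter (· ≤ i)) = #{k | k ≤ i ∧ f k = 0} := fun i => by
    congr 1; ext k; simp [hS, and_comm]
  have h1 : ∀ i, #((univ \ S).filter (· ≤ i)) = #{k | k ≤ i ∧ f k = 1} := fun i => by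
    congr 1; ext k; simp [hS, and_comm, Fin.ne_zero_iff_eq_one]
  simp only [Interleaves, h0, h1, hS, Nat.decide_odd_eq_bodd, Nat.bodd_add]
  constructor
  · intro h
    exact ⟨fun i hi => by simpa [hi] using h i, fun i hi => by simpa [hi] using h i⟩
  · rintro ⟨h0, h1⟩ i
    split_ifs with hi
    exacts [h0 i hi, h1 i hi]

lemma isRiffle_iff (p : ℕ) (w : Fin N → Bool) :
    IsRiffle N p w ↔ ∃ f : Fin N → Fin 2, #{k | f k = 0} = p ∧ Interleaves p.bodd w f := by
  constructor
  · rintro ⟨S, rfl, hS⟩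
    have hf : ∀ k, k ∈ S ↔ (if k ∈ S then 0 else 1 : Fin 2) = 0 := by simp
    exact ⟨fun k => if k ∈ S then 0 else 1, by congr 1; ext k; simp,
      (interleaves_iff _ w hf).2 hS⟩
  · rintro ⟨f, rfl, hf⟩
    exact ⟨_, rfl, (interleaves_iff _ w (by simp)).1 hf⟩

/-- `ε` is the parity of the number of cards taken from the top pile, i.e. of the cut. -/
def riffleCount (q ε : Bool) (w : Fin N → Bool) : ℕ :=
  #{f | Interleaves q w f ∧ (#{k | f k = 0}).bodd = ε}

lemma card_wAlt_eq (w : Fin N → Bool) :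
    #{f | wAlt f = w} = riffleCount false false w + riffleCount true true w := by
  rw [← card_filter_add_card_filter_not (s := {f | wAlt f = w})
    (fun f => (#{k | f k = 0}).bodd = false), filter_filter, filter_filter]
  congr 2 <;> ext f <;> cases h : (#{k | f k = 0}).bodd <;> simp [wAlt_eq_iff, h]

lemma riffleCount_ne_zero_iff {q ε : Bool} (w : Fin N → Bool) :
    riffleCount q ε w ≠ 0 ↔ ∃ f, Interleaves q w f ∧ (#{k | f k = 0}).bodd = ε := by
  simp [riffleCount]

lemma memE_iff {n : ℕ} (w : Fin (2 * n) → Bool) :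
    memE n w ↔ riffleCount false false w ≠ 0 := by
  simp only [memE, isRiffle_iff, riffleCount_ne_zero_iff]
  constructor
  · rintro ⟨p, hp, -, f, rfl, hf⟩
    have hb := (Nat.bodd_eq_false_iff_even _).2 hp
    exact ⟨f, hb ▸ hf, hb⟩
  · rintro ⟨f, hf, hb⟩
    exact ⟨_, (Nat.bodd_eq_false_iff_even _).1 hb, Fin.card_filter_le _, f, rfl, hb ▸ hf⟩

lemma memO_iff {n : ℕ} (w : Fin (2 * n) → Bool) :
    memO n w ↔ riffleCount true true w ≠ 0 := by
  simp only [memO, isRiffle_iff, riffleCount_ne_zero_iff]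
  constructor
  · rintro ⟨p, hp, -, -, f, rfl, hf⟩
    have hb := (Nat.bodd_eq_true_iff_odd _).2 hp
    exact ⟨f, hb ▸ hf, hb⟩
  · rintro ⟨f, hf, hb⟩
    have hodd := (Nat.bodd_eq_true_iff_odd _).1 hb
    have ⟨k, hk⟩ := hodd
    have hle := Fin.card_filter_le fun i => f i = 0
    exact ⟨_, hodd, by omega, by omega, f, rfl, hb ▸ hf⟩

lemma interleaves_snoc (q : Bool) (w : Fin (N + 1) → Bool) (f : Fin N → Fin 2) (a : Fin 2) :
    Interleaves q w (Fin.snoc f a) ↔ Interleaves q (Fin.init w) f ∧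
      w (Fin.last N) = if a = 0 then (#{k | f k = 0} + 1).bodd
        else q ^^ (#{k | f k = 1} + 1).bodd := by
  simp only [Interleaves, Fin.forall_fin_succ', Fin.snoc_castSucc, Fin.snoc_last, Fin.init,
    Fin.card_filter_univ_castSucc, Fin.castSucc_le_castSucc_iff, Fin.le_last, Fin.last_le_iff]
  split_ifs <;> simp_all [Fin.castSucc_ne_last, Fin.ne_zero_iff_eq_one]

lemma bodd_card_filter_eq_one_add_one (f : Fin N → Fin 2) :
    (#{k | f k = 1} + 1).bodd = ((N + 1).bodd ^^ (#{k | f k = 0}).bodd) := by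
  have h := congrArg (fun m => (m + 1).bodd) (Fin.card_filter_eq_zero_add_card_filter_eq_one f)
  simp only [add_assoc, Nat.bodd_add] at h ⊢
  rw [← h]
  cases (#{k | f k = 0}).bodd <;> simp

section

variable {q ε : Bool} {w : Fin (N + 1) → Bool} {f : Fin N → Fin 2}

lemma interleaves_snoc_zero :
    Interleaves q w (Fin.snoc f 0) ∧
        (#{k | (Fin.snoc f 0 : Fin (N + 1) → Fin 2) k = 0}).bodd = ε ↔
      w (Fin.last N) = ε ∧ Interleaves q (Fin.init w) f ∧ (#{k | f k = 0}).bodd = !ε := by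
  simp only [interleaves_snoc, Fin.card_filter_univ_castSucc, Fin.snoc_castSucc, Fin.snoc_last]
  cases h : (#{k | f k = 0}).bodd <;> cases ε <;> simp [h] <;> tauto

lemma interleaves_snoc_one :
    Interleaves q w (Fin.snoc f 1) ∧
        (#{k | (Fin.snoc f 1 : Fin (N + 1) → Fin 2) k = 0}).bodd = ε ↔
      w (Fin.last N) = (q ^^ (N + 1).bodd ^^ ε) ∧ Interleaves q (Fin.init w) f ∧
        (#{k | f k = 0}).bodd = ε := by
  simp only [interleaves_snoc, Fin.card_filter_univ_castSucc, Fin.snoc_castSucc, Fin.snoc_last,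
    bodd_card_filter_eq_one_add_one]
  cases h : (#{k | f k = 0}).bodd <;> cases ε <;> simp [h] <;> tauto

end

lemma riffleCount_snoc (q ε : Bool) (w : Fin (N + 1) → Bool) :
    riffleCount q ε w =
      (if w (Fin.last N) = ε then riffleCount q (!ε) (Fin.init w) else 0) +
      (if w (Fin.last N) = (q ^^ (N + 1).bodd ^^ ε) then riffleCount q ε (Fin.init w)
        else 0) := by
  rw [riffleCount, Fin.card_filter_snoc, Fin.sum_univ_two]
  simp only [interleaves_snoc_zero, interleaves_snoc_one]
  congr 1 <;> split_ifs with h <;> simp only [h, true_and, false_and, filter_false, card_empty,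
    riffleCount]

-- If `p` and the last position `N + 1` have different parities, both piles demand there the
-- colour opposite to the previous state; otherwise they demand opposite colours, and the colour
-- decides the pile and the new state.
lemma riffleCount_snoc_of_xor_eq_true {q : Bool} (h : (q ^^ (N + 1).bodd) = true) (ε : Bool)
    (w : Fin (N + 1) → Bool) :
    riffleCount q ε w = riffleCount q (!w (Fin.last N)) (Fin.init w) := by
  rw [riffleCount_snoc, h]
  cases ε <;> cases w (Fin.last N) <;> simp

lemma riffleCount_snoc_of_xor_eq_false {q : Bool} (h : (q ^^ (N + 1).bodd) = false) (ε : Bool)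
    (w : Fin (N + 1) → Bool) :
    riffleCount q ε w = if w (Fin.last N) = ε then
      riffleCount q false (Fin.init w) + riffleCount q true (Fin.init w) else 0 := by
  rw [riffleCount_snoc, h]
  cases ε <;> cases w (Fin.last N) <;> simp [add_comm]

lemma riffleCount_fin_zero (q ε : Bool) (w : Fin 0 → Bool) :
    riffleCount q ε w = if ε = false then 1 else 0 := by
  cases ε <;> simp [riffleCount, Interleaves]

variable {m : ℕ}

lemma riffleCount_false_two_mul_add_two (ε : Bool) (w : Fin (2 * m + 2) → Bool) :
    riffleCount false ε w = if w (Fin.last _) = ε then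
      2 * riffleCount false (!Fin.init w (Fin.last _)) (Fin.init (Fin.init w)) else 0 := by
  rw [riffleCount_snoc_of_xor_eq_false (by simp),
    riffleCount_snoc_of_xor_eq_true (by simp),
    riffleCount_snoc_of_xor_eq_true (by simp), ← two_mul]

lemma riffleCount_true_two_mul_add_two (ε : Bool) (w : Fin (2 * m + 2) → Bool) :
    riffleCount true ε w = if Fin.init w (Fin.last _) = !w (Fin.last _) then
      riffleCount true false (Fin.init (Fin.init w)) +
        riffleCount true true (Fin.init (Fin.init w)) else 0 := by
  rw [riffleCount_snoc_of_xor_eq_true (by simp),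
    riffleCount_snoc_of_xor_eq_false (by simp)]

lemma riffleCount_false_eq_zero_or_eq_pow (ε : Bool) (w : Fin (2 * m) → Bool) :
    riffleCount false ε w = 0 ∨ riffleCount false ε w = 2 ^ m := by
  induction m generalizing ε with
  | zero => cases ε <;> simp [riffleCount_fin_zero]
  | succ m ih =>
    rw [riffleCount_false_two_mul_add_two (m := m)]
    rcases ih (!Fin.init w (Fin.last (2 * m))) (Fin.init (Fin.init (w : Fin (2 * m + 2) → Bool)))
      with h | h <;> split_ifs <;> simp [h, pow_succ, mul_comm]

lemma riffleCount_true_add_eq_zero_or_eq_pow (w : Fin (2 * m) → Bool) :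
    riffleCount true false w + riffleCount true true w = 0 ∨
      riffleCount true false w + riffleCount true true w = 2 ^ m := by
  induction m with
  | zero => simp [riffleCount_fin_zero]
  | succ m ih =>
    rw [riffleCount_true_two_mul_add_two (m := m), riffleCount_true_two_mul_add_two (m := m)]
    rcases ih (Fin.init (Fin.init (w : Fin (2 * m + 2) → Bool))) with h | h <;>
      split_ifs <;> simp [h, pow_succ, mul_comm, ← two_mul]

lemma riffleCount_true_true_eq_zero_or_eq_pow (w : Fin (2 * m) → Bool) :
    riffleCount true true w = 0 ∨ riffleCount true true w = 2 ^ (m - 1) := by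
  cases m with
  | zero => simp [riffleCount_fin_zero]
  | succ m =>
    rw [riffleCount_true_two_mul_add_two (m := m)]
    rcases riffleCount_true_add_eq_zero_or_eq_pow
      (Fin.init (Fin.init (w : Fin (2 * m + 2) → Bool))) with h | h <;> split_ifs <;> simp [h]

lemma riffleCount_true_false_eq_riffleCount_true_true (hm : 1 ≤ m) (w : Fin (2 * m) → Bool) :
    riffleCount true false w = riffleCount true true w := by
  obtain ⟨m, rfl⟩ := Nat.exists_eq_add_of_le' hm
  rw [riffleCount_true_two_mul_add_two (m := m), riffleCount_true_two_mul_add_two (m := m)]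

lemma eq_w0_succ_iff (w : Fin (N + 1) → Bool) :
    w = w0 (N + 1) ↔ Fin.init w = w0 N ∧ w (Fin.last N) = decide (Odd (N + 1)) := by
  constructor
  · rintro rfl
    exact ⟨rfl, rfl⟩
  · rintro ⟨hinit, hlast⟩
    rw [← Fin.snoc_init_self w, hinit, hlast]
    funext i
    cases i using Fin.lastCases <;> simp [w0]

lemma riffleCount_ne_zero_and_add_ne_zero_iff_eq_w0 (w : Fin (2 * m) → Bool) :
    riffleCount false false w ≠ 0 ∧ riffleCount true false w + riffleCount true true w ≠ 0 ↔
      w = w0 (2 * m) := by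
  induction m with
  | zero =>
    simp only [riffleCount_fin_zero]
    exact iff_of_true (by simp) (funext fun i => (Nat.not_lt_zero _ i.isLt).elim)
  | succ m ih =>
    rw [riffleCount_false_two_mul_add_two (m := m), riffleCount_true_two_mul_add_two (m := m),
      riffleCount_true_two_mul_add_two (m := m)]
    show _ ↔ @Eq (Fin (2 * m + 1 + 1) → Bool) w (w0 (2 * m + 1 + 1))
    rw [eq_w0_succ_iff (N := 2 * m + 1) w, eq_w0_succ_iff, ← ih]
    cases Fin.init w (Fin.last _) <;> cases w (Fin.last _) <;> simp [Nat.odd_add_one]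

lemma riffleCount_ne_zero_and_ne_zero_iff_eq_w0 (hm : 1 ≤ m) (w : Fin (2 * m) → Bool) :
    riffleCount false false w ≠ 0 ∧ riffleCount true true w ≠ 0 ↔ w = w0 (2 * m) := by
  rw [← riffleCount_ne_zero_and_add_ne_zero_iff_eq_w0,
    riffleCount_true_false_eq_riffleCount_true_true hm]
  omega

/-- The number of `2`-shuffle words producing the color pattern `w` from the alternating
deck of `2n` cards: `2^n + 2^{n-1}` for `w = w_0`; `2^{n-1}` for `w ∈ O \ {w_0}`;
`2^n` for `w ∈ E \ {w_0}`; `0` otherwise. Dividing by `2^{2n}` gives `Q_2(w)`. -/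
theorem statement17 (n : ℕ) (hn : 1 ≤ n) (w : Fin (2 * n) → Bool) :
    (w = w0 (2 * n) →
      (Finset.univ.filter fun f : Fin (2 * n) → Fin 2 => wAlt f = w).card =
        2 ^ n + 2 ^ (n - 1)) ∧
    (memO n w → w ≠ w0 (2 * n) →
      (Finset.univ.filter fun f : Fin (2 * n) → Fin 2 => wAlt f = w).card = 2 ^ (n - 1)) ∧
    (memE n w → w ≠ w0 (2 * n) →
      (Finset.univ.filter fun f : Fin (2 * n) → Fin 2 => wAlt f = w).card = 2 ^ n) ∧
    (¬ memO n w → ¬ memE n w →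
      (Finset.univ.filter fun f : Fin (2 * n) → Fin 2 => wAlt f = w).card = 0) := by
  simp only [ne_eq, ← riffleCount_ne_zero_and_ne_zero_iff_eq_w0 hn, memE_iff, memO_iff,
    card_wAlt_eq]
  rcases riffleCount_false_eq_zero_or_eq_pow false w with hE | hE <;>
    rcases riffleCount_true_true_eq_zero_or_eq_pow w with hO | hO <;> simp [hE, hO]
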